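/- arXiv:1611.01645 — 3 statements merged into one kernel-verified Lean document; each statement's English description precedes it below -/
import Mathlib

section
/- Let F = { x ∈ SATP(n,n) : x^{3,1}_{i,j} = x^{3,2}_{i,j} = 0 for all i,j, and x^{1,2}_{i,i} = x^{2,1}_{i,i} = 0 for all i }. Then the image of F under the linear projection x ↦ (x^{1,1}_{i,j})_{1 ≤ i ≤ j ≤ n} is exactly the Boolean quadric polytope BQP(n). (Thus BQP(n) is the projection of a face of SATP(n,n).) -/
open Finset

/-- A point of ℝ^{6mn}: coordinates x^{k,l}_{i,j} with `i : Fin m`, `j : Fin n`,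
`k : Fin 3` (the paper's k-1, since the paper indexes k ∈ {1,2,3}) and
`l : Fin 2` (the paper's l-1). -/
abbrev Pt (m n : ℕ) := Fin m → Fin n → Fin 3 → Fin 2 → ℝ

/-- The relaxation polytope SATP_LP(m,n), given by the constraints (i)-(iv). -/
def SATPLP (m n : ℕ) : Set (Pt m n) :=
  {x | (∀ i j, ∑ k, ∑ l, x i j k l = 1) ∧
       (∀ i j t, ∑ k, x i j k 0 = ∑ k, x i t k 0) ∧
       (∀ k j i s, x i j k 0 + x i j k 1 = x s j k 0 + x s j k 1) ∧
       (∀ i j k l, 0 ≤ x i j k l)}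

/-- The integral points of SATP_LP(m,n): the points all of whose coordinates are 0 or 1. -/
def IntPts (m n : ℕ) : Set (Pt m n) :=
  {x | x ∈ SATPLP m n ∧ ∀ i j k l, x i j k l = 0 ∨ x i j k l = 1}

/-- SATP(m,n): the convex hull of the integral points of SATP_LP(m,n). -/
def SATP (m n : ℕ) : Set (Pt m n) := convexHull ℝ (IntPts m n)

/-- The Boolean quadric polytope BQP(n): the convex hull in ℝ^{n(n+1)/2} (coordinates
indexed by pairs i ≤ j) of the points p(s), s ∈ {0,1}^n, with p(s)_{i,j} = s_i·s_j. -/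
def BQP (n : ℕ) : Set ({p : Fin n × Fin n // p.1 ≤ p.2} → ℝ) :=
  convexHull ℝ
    {p | ∃ s : Fin n → Fin 2, p = fun q => ((s q.1.1 : ℕ) : ℝ) * ((s q.1.2 : ℕ) : ℝ)}

namespace Stmt14Aux

lemma fin2_cast (a : Fin 2) : ((a : ℕ) : ℝ) = 0 ∨ ((a : ℕ) : ℝ) = 1 := by
  fin_cases a <;> simp

noncomputable def Xpt {n : ℕ} (s : Fin n → Fin 2) : Pt n n :=
  fun i j k l =>
    ![![((s i : ℕ) : ℝ) * ((s j : ℕ) : ℝ), (1 - ((s i : ℕ) : ℝ)) * ((s j : ℕ) : ℝ)],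
      ![((s i : ℕ) : ℝ) * (1 - ((s j : ℕ) : ℝ)),
        (1 - ((s i : ℕ) : ℝ)) * (1 - ((s j : ℕ) : ℝ))],
      ![0, 0]] k l

lemma Xpt_mem {n : ℕ} (s : Fin n → Fin 2) : Xpt s ∈ IntPts n n := by
  refine ⟨⟨?_, ?_, ?_, ?_⟩, ?_⟩
  · intro i j
    simp [Fin.sum_univ_three, Fin.sum_univ_two, Xpt]
    ring
  · intro i j t
    simp [Fin.sum_univ_three, Xpt]
    ring
  · intro k j i t
    fin_cases k <;> simp [Xpt] <;> ring
  · intro i j k l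
    rcases fin2_cast (s i) with h1 | h1 <;> rcases fin2_cast (s j) with h2 | h2 <;>
      fin_cases k <;> fin_cases l <;> simp [Xpt, h1, h2, Matrix.vecHead, Matrix.vecTail]
  · intro i j k l
    rcases fin2_cast (s i) with h1 | h1 <;> rcases fin2_cast (s j) with h2 | h2 <;>
      fin_cases k <;> fin_cases l <;> simp [Xpt, h1, h2, Matrix.vecHead, Matrix.vecTail]

lemma Xpt_zeros {n : ℕ} (s : Fin n → Fin 2) :
    (∀ i j, Xpt s i j 2 0 = 0 ∧ Xpt s i j 2 1 = 0) ∧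
    (∀ i, Xpt s i i 0 1 = 0 ∧ Xpt s i i 1 0 = 0) := by
  constructor
  · intro i j; constructor <;> simp [Xpt]
  · intro i
    rcases fin2_cast (s i) with h1 | h1 <;> constructor <;> simp [Xpt, h1]

lemma int_struct {n : ℕ} (y : Pt n n) (hy : y ∈ IntPts n n)
    (h2 : ∀ i j, y i j 2 0 = 0 ∧ y i j 2 1 = 0)
    (hd : ∀ i, y i i 0 1 = 0 ∧ y i i 1 0 = 0) :
    ∀ i j, y i j 0 0 = y i i 0 0 * y j j 0 0 := by
  obtain ⟨⟨h1, hrow, hcol, hnn⟩, hint⟩ := hy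
  intro i j
  have A := hrow i j i
  have B := hcol 0 j i j
  have C := h1 i j
  simp only [Fin.sum_univ_three, Fin.sum_univ_two] at A C
  rw [(h2 i j).1, (h2 i j).2] at C
  rw [(h2 i j).1, (h2 i i).1, (hd i).2] at A
  rw [(hd j).1] at B
  rcases hint i i 0 0 with d1 | d1 <;> rcases hint j j 0 0 with d2 | d2 <;>
    rcases hint i j 0 0 with e1 | e1 <;> rcases hint i j 0 1 with e2 | e2 <;>
    rcases hint i j 1 0 with e3 | e3 <;>
    simp [d1, d2, e1, e2, e3] at A B C ⊢ <;> linarith [hnn i j 1 1]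

end Stmt14Aux

/-- the image of the face F = {x ∈ SATP(n,n) : x^{3,1} = x^{3,2} = 0,
x^{1,2}_{i,i} = x^{2,1}_{i,i} = 0} under the projection x ↦ (x^{1,1}_{i,j})_{i ≤ j} is
exactly BQP(n). (Indices shifted down by one: x^{k,l}_{i,j} is `x i j (k-1) (l-1)`.) -/


theorem stmt14 (n : ℕ) :
    (fun x : Pt n n => fun q : {p : Fin n × Fin n // p.1 ≤ p.2} => x q.1.1 q.1.2 0 0) ''
      {x ∈ SATP n n |
        (∀ i j, x i j 2 0 = 0 ∧ x i j 2 1 = 0) ∧ (∀ i, x i i 0 1 = 0 ∧ x i i 1 0 = 0)}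
    = BQP n := by
  apply Set.Subset.antisymm
  · rintro p ⟨x, ⟨hxS, hz, hd⟩, rfl⟩
    show (fun q : {p : Fin n × Fin n // p.1 ≤ p.2} => x q.1.1 q.1.2 0 0) ∈ BQP n
    rw [SATP, _root_.convexHull_eq] at hxS
    obtain ⟨ι, t, w, z, hw0, hw1, hzm, hcm⟩ := hxS
    set t' : Finset ι := t.filter (fun a => 0 < w a) with ht'
    have hsub : t' ⊆ t := Finset.filter_subset _ _
    have hout : ∀ a ∈ t, a ∉ t' → w a = 0 := by
      intro a ha hna
      simp only [ht', Finset.mem_filter, not_and, not_lt] at hna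
      exact le_antisymm (hna ha) (hw0 a ha)
    have hw1' : ∑ a ∈ t', w a = 1 := by
      rw [Finset.sum_subset hsub (fun a ha hna => hout a ha hna)]; exact hw1
    have hx_eq : x = ∑ a ∈ t', w a • z a := by
      rw [← hcm, Finset.centerMass_eq_of_sum_1 _ _ hw1]
      exact (Finset.sum_subset hsub (fun a ha hna => by rw [hout a ha hna, zero_smul])).symm
    have hcoord : ∀ i j k l, x i j k l = ∑ a ∈ t', w a * z a i j k l := by
      intro i j k l
      rw [hx_eq]
      simp [Finset.sum_apply, Pi.smul_apply]
    have hzero : ∀ a ∈ t', ∀ i j k l, x i j k l = 0 → z a i j k l = 0 := by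
      intro a ha i j k l hxz
      rw [hcoord i j k l] at hxz
      have hterm : ∀ b ∈ t', w b * z b i j k l = 0 :=
        (Finset.sum_eq_zero_iff_of_nonneg (fun b hb =>
          mul_nonneg (hw0 b (hsub hb)) ((hzm b (hsub hb)).1.2.2.2 i j k l))).mp hxz
      have hwa : 0 < w a := (Finset.mem_filter.mp ha).2
      have := hterm a ha
      rcases mul_eq_zero.mp this with h | h
      · exact absurd h (ne_of_gt hwa)
      · exact h
    -- each z a decomposes
    have hdecomp : ∀ a ∈ t', ∃ s : Fin n → Fin 2,
        (fun q : {p : Fin n × Fin n // p.1 ≤ p.2} => z a q.1.1 q.1.2 0 0)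
          = fun q => ((s q.1.1 : ℕ) : ℝ) * ((s q.1.2 : ℕ) : ℝ) := by
      intro a ha
      have hmem := hzm a (hsub ha)
      have h2 : ∀ i j, z a i j 2 0 = 0 ∧ z a i j 2 1 = 0 :=
        fun i j => ⟨hzero a ha i j 2 0 (hz i j).1, hzero a ha i j 2 1 (hz i j).2⟩
      have hdg : ∀ i, z a i i 0 1 = 0 ∧ z a i i 1 0 = 0 :=
        fun i => ⟨hzero a ha i i 0 1 (hd i).1, hzero a ha i i 1 0 (hd i).2⟩
      have key := Stmt14Aux.int_struct (z a) hmem h2 hdg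
      refine ⟨fun i => if z a i i 0 0 = 1 then 1 else 0, ?_⟩
      have hcast : ∀ i, ((((if z a i i 0 0 = 1 then (1 : Fin 2) else 0) : Fin 2) : ℕ) : ℝ)
          = z a i i 0 0 := by
        intro i
        rcases hmem.2 i i 0 0 with h | h <;> simp [h]
      funext q
      rw [key q.1.1 q.1.2, hcast, hcast]
    choose sfun hsfun using hdecomp
    have hproj : (fun q : {p : Fin n × Fin n // p.1 ≤ p.2} => x q.1.1 q.1.2 0 0)
        = ∑ a ∈ t'.attach, w a.1 • (fun q : {p : Fin n × Fin n // p.1 ≤ p.2} =>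
            ((sfun a.1 a.2 q.1.1 : ℕ) : ℝ) * ((sfun a.1 a.2 q.1.2 : ℕ) : ℝ)) := by
      funext q
      rw [hcoord]
      rw [← Finset.sum_attach t' (fun a => w a * z a q.1.1 q.1.2 0 0)]
      simp only [Finset.sum_apply, Pi.smul_apply, smul_eq_mul]
      congr 1
      funext a
      congr 1
      have := congrFun (hsfun a.1 a.2) q
      exact this
    rw [hproj]
    apply Convex.sum_mem (convex_convexHull ℝ _)
    · intro a _; exact hw0 a.1 (hsub a.2)
    · rw [← hw1', ← Finset.sum_attach t' w]
    · intro a _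
      exact subset_convexHull ℝ _ ⟨sfun a.1 a.2, rfl⟩
  · rw [BQP]
    apply convexHull_min
    · rintro p ⟨s, rfl⟩
      refine ⟨Stmt14Aux.Xpt s, ⟨?_, ?_, ?_⟩, ?_⟩
      · exact subset_convexHull ℝ _ (Stmt14Aux.Xpt_mem s)
      · exact (Stmt14Aux.Xpt_zeros s).1
      · exact (Stmt14Aux.Xpt_zeros s).2
      · funext q
        simp [Stmt14Aux.Xpt]
    · -- the image is convex
      rintro p1 ⟨x1, ⟨hx1S, hx1z, hx1d⟩, rfl⟩ p2 ⟨x2, ⟨hx2S, hx2z, hx2d⟩, rfl⟩ a b ha hb hab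
      refine ⟨a • x1 + b • x2, ⟨?_, ?_, ?_⟩, ?_⟩
      · exact (convex_convexHull ℝ _) hx1S hx2S ha hb hab
      · intro i j
        constructor
        · simp only [Pi.add_apply, Pi.smul_apply, smul_eq_mul]
          rw [(hx1z i j).1, (hx2z i j).1]; ring
        · simp only [Pi.add_apply, Pi.smul_apply, smul_eq_mul]
          rw [(hx1z i j).2, (hx2z i j).2]; ring
      · intro i
        constructor
        · simp only [Pi.add_apply, Pi.smul_apply, smul_eq_mul]
          rw [(hx1d i).1, (hx2d i).1]; ring
        · simp only [Pi.add_apply, Pi.smul_apply, smul_eq_mul]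
          rw [(hx1d i).2, (hx2d i).2]; ring
      · funext q
        simp
end

section
/- Let q* be the integral point of SATP_LP(m,n) with (q*)^{1,1}_{i,j} = 1 for all i,j (and all other coordinates 0). If w ∈ SATP_LP(m,n) satisfies w^{1,1}_{i,j} > 0 for all i,j, then there exist α ∈ (0,1] and h ∈ SATP_LP(m,n) such that w = α·q* + (1−α)·h. -/
open Finset

/-- The integral point q* with (q*)^{1,1}_{i,j} = 1 for all i,j and all other
coordinates 0. -/
def qstar (m n : ℕ) : Pt m n := fun _ _ k l => if k = 0 ∧ l = 0 then 1 else 0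

/-! Take for α a positive lower bound of the finitely many coordinates w^{1,1}_{i,j}, capped at
1/2 so that 1 - α ≠ 0. Then w - α·q* is coordinatewise nonnegative, and since the equations
(i)-(iii) cut out an affine subspace containing w and q*, the point h = (w - α·q*)/(1 - α) lies
in SATP_LP(m,n). -/

lemma exists_pos_forall_le_of_forall_pos {ι : Type*} [Finite ι] {f : ι → ℝ}
    (hf : ∀ i, 0 < f i) : ∃ ε, 0 < ε ∧ ∀ i, ε ≤ f i := by
  cases isEmpty_or_nonempty ι
  · exact ⟨1, one_pos, isEmptyElim⟩
  · obtain ⟨i₀, hi₀⟩ := Finite.exists_min f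
    exact ⟨f i₀, hf i₀, hi₀⟩

lemma qstar_mem (m n : ℕ) : qstar m n ∈ SATPLP m n := by
  refine ⟨fun i j => ?_, fun i j t => rfl, fun k j i s => rfl, fun i j k l => ?_⟩
  · simp [qstar, ite_and]
  · unfold qstar
    positivity

lemma add_smul_mem_SATPLP {m n : ℕ} {x y : Pt m n} (hx : x ∈ SATPLP m n) (hy : y ∈ SATPLP m n)
    {a b : ℝ} (hab : a + b = 1) (hnonneg : ∀ i j k l, 0 ≤ a * x i j k l + b * y i j k l) :
    a • x + b • y ∈ SATPLP m n := by
  obtain ⟨hx₁, hx₂, hx₃, -⟩ := hx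
  obtain ⟨hy₁, hy₂, hy₃, -⟩ := hy
  refine ⟨fun i j => ?_, fun i j t => ?_, fun k j i s => ?_, hnonneg⟩
  · simp only [Pi.add_apply, Pi.smul_apply, smul_eq_mul, sum_add_distrib, ← mul_sum,
      hx₁, hy₁, mul_one, hab]
  · simp only [Pi.add_apply, Pi.smul_apply, smul_eq_mul, sum_add_distrib, ← mul_sum,
      hx₂ i j t, hy₂ i j t]
  · simp only [Pi.add_apply, Pi.smul_apply, smul_eq_mul]
    linear_combination a * hx₃ k j i s + b * hy₃ k j i s

lemma exists_mem_SATPLP_eq_smul_add_smul {m n : ℕ} {x q : Pt m n} (hx : x ∈ SATPLP m n)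
    (hq : q ∈ SATPLP m n) {α : ℝ} (hα : α < 1) (hle : ∀ i j k l, α * q i j k l ≤ x i j k l) :
    ∃ h ∈ SATPLP m n, x = α • q + (1 - α) • h := by
  have hα₁ : 0 < 1 - α := sub_pos.2 hα
  refine ⟨(1 - α)⁻¹ • x + (-(α * (1 - α)⁻¹)) • q,
    add_smul_mem_SATPLP hx hq (by field_simp; ring) fun i j k l => ?_, ?_⟩
  · have : 0 ≤ (1 - α)⁻¹ * (x i j k l - α * q i j k l) :=
      mul_nonneg (inv_nonneg.2 hα₁.le) (sub_nonneg.2 (hle i j k l))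
    linarith
  · match_scalars
    · field_simp
    · field_simp
      ring

lemma smul_qstar_le {m n : ℕ} {w : Pt m n} (hw : w ∈ SATPLP m n) {α : ℝ}
    (hα : ∀ i j, α ≤ w i j 0 0) (i : Fin m) (j : Fin n) (k : Fin 3) (l : Fin 2) :
    α * qstar m n i j k l ≤ w i j k l := by
  unfold qstar
  split_ifs with hkl
  · obtain ⟨rfl, rfl⟩ := hkl
    simpa using hα i j
  · simpa using hw.2.2.2 i j k l

/-- any w ∈ SATP_LP(m,n) with w^{1,1}_{i,j} > 0 for all i,j decomposes as
w = α·q* + (1-α)·h with α ∈ (0,1] and h ∈ SATP_LP(m,n). -/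
theorem stmt16 (m n : ℕ) (w : Pt m n) (hw : w ∈ SATPLP m n)
    (hpos : ∀ i j, 0 < w i j 0 0) :
    ∃ α : ℝ, 0 < α ∧ α ≤ 1 ∧
      ∃ h ∈ SATPLP m n, w = α • qstar m n + (1 - α) • h := by
  obtain ⟨ε, hε, hεw⟩ :=
    exists_pos_forall_le_of_forall_pos (f := fun p : Fin m × Fin n => w p.1 p.2 0 0)
      fun p => hpos p.1 p.2
  set α := min ε (1 / 2)
  have hα₁ : α < 1 := (min_le_right ε _).trans_lt (by norm_num)
  have hαw : ∀ i j, α ≤ w i j 0 0 := fun i j => (min_le_left ε _).trans (hεw (i, j))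
  exact ⟨α, lt_min hε one_half_pos, hα₁.le,
    exists_mem_SATPLP_eq_smul_add_smul hw (qstar_mem m n) hα₁ (smul_qstar_le hw hαw)⟩
end

section
/- The maximum of ⟨c,z⟩ over the integral points z of SATP_LP(m,n) equals |E| if and only if there exist colorings f : {1,…,m} → {1,2} and g : {1,…,n} → {1,2,3} such that pc(i,j,g(j),f(i)) is permitted for every edge (i,j) ∈ E. (Consequently, the edge constrained bipartite graph coloring instance has a solution if and only if the linear function ⟨c,·⟩ attains the value |E| at an integral vertex of SATP(m,n).) -/
open Finset

/-- Standard inner product on ℝ^{6mn}. -/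
def dotp {m n : ℕ} (v x : Pt m n) : ℝ :=
  ∑ i, ∑ j, ∑ k, ∑ l, v i j k l * x i j k l

lemma ite_inj {p q : Prop} [Decidable p] [Decidable q]
    (h : (if p then (1:ℝ) else 0) = if q then 1 else 0) : p ↔ q := by
  by_cases hp : p <;> by_cases hq : q <;> simp [hp, hq] at h ⊢

lemma intpts_struct {m n : ℕ} {z : Pt m n} (hz : z ∈ IntPts m n) :
    ∃ (f : Fin m → Fin 2) (g : Fin n → Fin 3),
      ∀ i j k l, z i j k l = if k = g j ∧ l = f i then 1 else 0 := by
  obtain ⟨⟨hsum, hcol, hrow, hnn⟩, hbin⟩ := hz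
  have hsum' : ∀ i j, ∑ p : Fin 3 × Fin 2, z i j p.1 p.2 = 1 := by
    intro i j; rw [Fintype.sum_prod_type]; exact hsum i j
  have hone : ∀ i j, ∃ p : Fin 3 × Fin 2, z i j p.1 p.2 = 1 := by
    intro i j
    by_contra h
    push_neg at h
    have h0 : ∀ k l, z i j k l = 0 := fun k l => (hbin i j k l).resolve_right (h (k, l))
    have := hsum i j
    simp [h0] at this
  have huniq : ∀ i j (p q : Fin 3 × Fin 2),
      z i j p.1 p.2 = 1 → z i j q.1 q.2 = 1 → p = q := by
    intro i j p q hp hq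
    by_contra hne
    have h1 : z i j p.1 p.2 + z i j q.1 q.2 ≤ ∑ r : Fin 3 × Fin 2, z i j r.1 r.2 := by
      rw [← Finset.add_sum_erase _ _ (Finset.mem_univ p)]
      have hq' : q ∈ (Finset.univ.erase p) := Finset.mem_erase.2 ⟨Ne.symm hne, Finset.mem_univ q⟩
      have := Finset.single_le_sum (f := fun r : Fin 3 × Fin 2 => z i j r.1 r.2)
        (fun r _ => hnn i j r.1 r.2) hq'
      linarith
    rw [hsum' i j, hp, hq] at h1
    linarith
  choose P hP using hone
  have hform : ∀ i j k l, z i j k l = if (k, l) = P i j then 1 else 0 := by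
    intro i j k l
    by_cases h : (k, l) = P i j
    · rw [if_pos h]
      have := hP i j
      rw [show k = (P i j).1 from congrArg Prod.fst h, show l = (P i j).2 from congrArg Prod.snd h]
      exact this
    · rw [if_neg h]
      rcases hbin i j k l with h0 | h1
      · exact h0
      · exact absurd (huniq i j (k, l) (P i j) h1 (hP i j)) h
  have col_sum : ∀ i j, ∑ k, z i j k 0 = if (P i j).2 = 0 then 1 else 0 := by
    intro i j
    simp only [hform, Prod.ext_iff]
    rcases hq : P i j with ⟨k', l'⟩
    by_cases hl0 : l' = 0
    · subst hl0; simp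
    · have h0 : (0 : Fin 2) ≠ l' := fun h => hl0 h.symm
      simp [hl0, h0]
  have row_sum : ∀ i j k, z i j k 0 + z i j k 1 = if k = (P i j).1 then 1 else 0 := by
    intro i j k
    simp only [hform, Prod.ext_iff]
    rcases hq : P i j with ⟨k', l'⟩
    have : l' = 0 ∨ l' = 1 := by omega
    rcases this with h | h <;> subst h <;> by_cases hk : k = k' <;> simp [hk]
  have hl : ∀ i j t, (P i j).2 = (P i t).2 := by
    intro i j t
    have := hcol i j t
    rw [col_sum, col_sum] at this
    have := ite_inj this
    have h2 : (P i j).2 = 0 ∨ (P i j).2 = 1 := by omega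
    have h3 : (P i t).2 = 0 ∨ (P i t).2 = 1 := by omega
    rcases h2 with h2 | h2 <;> rcases h3 with h3 | h3 <;> simp [h2, h3] at this ⊢
  have hk : ∀ j i s, (P i j).1 = (P s j).1 := by
    intro j i s
    have := hrow (P i j).1 j i s
    rw [row_sum, row_sum] at this
    have := ite_inj this
    exact this.1 rfl
  refine ⟨fun i => if h : 0 < n then (P i ⟨0, h⟩).2 else 0,
          fun j => if h : 0 < m then (P ⟨0, h⟩ j).1 else 0, ?_⟩
  intro i j k l
  rw [hform]
  have hgn : (if h : 0 < m then (P ⟨0, h⟩ j).1 else 0) = (P i j).1 := by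
    rw [dif_pos i.pos]; exact hk j ⟨0, i.pos⟩ i
  have hfn : (if h : 0 < n then (P i ⟨0, h⟩).2 else 0) = (P i j).2 := by
    rw [dif_pos j.pos]; exact hl i ⟨0, j.pos⟩ j
  simp only []
  simp only [hgn, hfn]
  simp [Prod.ext_iff]

lemma struct_mem {m n : ℕ} (f : Fin m → Fin 2) (g : Fin n → Fin 3) :
    (fun i j k l => if k = g j ∧ l = f i then (1:ℝ) else 0) ∈ IntPts m n := by
  have h2 : ∀ a : Fin 2, a = 0 ∨ a = 1 := by decide
  refine ⟨⟨?_, ?_, ?_, ?_⟩, ?_⟩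
  · intro i j
    simp [ite_and, Finset.sum_ite_eq']
  · intro i j t
    simp [ite_and, Finset.sum_ite_eq']
  · intro k j i s
    rcases h2 (f i) with h | h <;> rcases h2 (f s) with h' | h' <;>
      by_cases hk : k = g j <;> simp [h, h', hk]
  · intro i j k l
    simp only []
    split <;> norm_num
  · intro i j k l
    simp only []
    split <;> simp

lemma dotp_struct {m n : ℕ} (c : Pt m n) (f : Fin m → Fin 2) (g : Fin n → Fin 3) :
    dotp c (fun i j k l => if k = g j ∧ l = f i then (1:ℝ) else 0) =
      ∑ i, ∑ j, c i j (g j) (f i) := by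
  unfold dotp
  congr 1; ext i; congr 1; ext j
  simp [ite_and, mul_ite, Finset.sum_ite_eq']

lemma sum_pairs {m n : ℕ} (t : Fin m → Fin n → ℝ) :
    ∑ i, ∑ j, t i j = ∑ p : Fin m × Fin n, t p.1 p.2 := by
  rw [Fintype.sum_prod_type]

lemma sum_over_edges {m n : ℕ} (E : Finset (Fin m × Fin n)) (t : Fin m → Fin n → ℝ)
    (h0 : ∀ p : Fin m × Fin n, p ∉ E → t p.1 p.2 = 0) :
    ∑ i, ∑ j, t i j = ∑ p ∈ E, t p.1 p.2 := by
  rw [sum_pairs]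
  exact (Finset.sum_subset (Finset.subset_univ E) (fun p _ hp => h0 p hp)).symm

/-- for the 2-3 edge constrained bipartite graph coloring objective
vector c, the maximum of ⟨c,z⟩ over the integral points of SATP_LP(m,n) equals |E|
iff there are colorings f : U → {1,2}, g : V → {1,2,3} such that every edge (i,j) ∈ E
has permitted color combination (g j, f i). Right colors are `Fin 3`, left colors
`Fin 2`; `pc p k l = true` means the combination is permitted. -/
theorem stmt17 (m n : ℕ) (E : Finset (Fin m × Fin n))
    (pc : Fin m × Fin n → Fin 3 → Fin 2 → Bool) (c : Pt m n)
    (hperm : ∀ p ∈ E, ∀ k l, pc p k l = true → c p.1 p.2 k l = 1)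
    (hforb : ∀ p ∈ E, ∀ k l, pc p k l = false → (c p.1 p.2 k l = -1 ∨ c p.1 p.2 k l = 0))
    (hnon : ∀ p : Fin m × Fin n, p ∉ E → ∀ k l, c p.1 p.2 k l = 0) :
    IsGreatest (dotp c '' IntPts m n) (E.card : ℝ) ↔
      ∃ (f : Fin m → Fin 2) (g : Fin n → Fin 3),
        ∀ p ∈ E, pc p (g p.2) (f p.1) = true := by
  -- each edge term is ≤ 1
  have hle1 : ∀ p ∈ E, ∀ k l, c p.1 p.2 k l ≤ 1 := by
    intro p hp k l
    cases hb : pc p k l with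
    | true => exact le_of_eq (hperm p hp k l hb)
    | false => rcases hforb p hp k l hb with h | h <;> rw [h] <;> norm_num
  -- dotp over a structured point
  have hdot : ∀ (f : Fin m → Fin 2) (g : Fin n → Fin 3),
      dotp c (fun i j k l => if k = g j ∧ l = f i then (1:ℝ) else 0) =
        ∑ p ∈ E, c p.1 p.2 (g p.2) (f p.1) := by
    intro f g
    rw [dotp_struct]
    exact sum_over_edges E (fun i j => c i j (g j) (f i)) (fun p hp => hnon p hp _ _)
  -- upper bound: every value of dotp c over IntPts is ≤ |E|
  have hub : ∀ r ∈ dotp c '' IntPts m n, r ≤ (E.card : ℝ) := by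
    rintro r ⟨z, hz, rfl⟩
    obtain ⟨f, g, hfg⟩ := intpts_struct hz
    have hze : z = fun i j k l => if k = g j ∧ l = f i then (1:ℝ) else 0 := by
      funext i j k l; exact hfg i j k l
    rw [hze, hdot]
    calc ∑ p ∈ E, c p.1 p.2 (g p.2) (f p.1) ≤ ∑ p ∈ E, (1:ℝ) :=
          Finset.sum_le_sum (fun p hp => hle1 p hp _ _)
      _ = E.card := by simp
  constructor
  · rintro ⟨hmem, -⟩
    obtain ⟨z, hz, hdz⟩ := hmem
    obtain ⟨f, g, hfg⟩ := intpts_struct hz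
    have hze : z = fun i j k l => if k = g j ∧ l = f i then (1:ℝ) else 0 := by
      funext i j k l; exact hfg i j k l
    rw [hze, hdot] at hdz
    have hall : ∀ p ∈ E, c p.1 p.2 (g p.2) (f p.1) = 1 := by
      by_contra h
      push_neg at h
      obtain ⟨p, hp, hne⟩ := h
      have hlt : ∑ p ∈ E, c p.1 p.2 (g p.2) (f p.1) < ∑ p ∈ E, (1:ℝ) :=
        Finset.sum_lt_sum (fun q hq => hle1 q hq _ _)
          ⟨p, hp, lt_of_le_of_ne (hle1 p hp _ _) hne⟩
      rw [hdz] at hlt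
      simp at hlt
    refine ⟨f, g, fun p hp => ?_⟩
    cases hb : pc p (g p.2) (f p.1) with
    | true => rfl
    | false =>
        have := hall p hp
        rcases hforb p hp _ _ hb with h | h <;> rw [h] at this <;> norm_num at this
  · rintro ⟨f, g, hfg⟩
    refine ⟨⟨_, struct_mem f g, ?_⟩, hub⟩
    rw [hdot]
    rw [Finset.sum_congr rfl (fun p hp => hperm p hp _ _ (hfg p hp))]
    simp
end
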